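/- Let Σ be a connected tetravalent (X,2)-transitive graph, i.e. Σ has valency 4 and is (X,2)-arc-transitive but not (X,3)-arc-transitive. Then either Σ is isomorphic to the complete graph K₅, or Σ is a near n-gonal graph for some integer n ≥ 4. -/

import Mathlib

open Pointwise

/-- A 2-arc `(t.1, t.2.1, t.2.2)` of a simple graph. -/
def IsArc2 {V : Type*} (G : SimpleGraph V) (t : V × V × V) : Prop :=
  G.Adj t.1 t.2.1 ∧ G.Adj t.2.1 t.2.2 ∧ t.1 ≠ t.2.2

/-- A 3-arc `(t.1, t.2.1, t.2.2.1, t.2.2.2)` of a simple graph. -/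
def IsArc3 {V : Type*} (G : SimpleGraph V) (t : V × V × V × V) : Prop :=
  G.Adj t.1 t.2.1 ∧ G.Adj t.2.1 t.2.2.1 ∧ G.Adj t.2.2.1 t.2.2.2 ∧
    t.1 ≠ t.2.2.1 ∧ t.2.1 ≠ t.2.2.2

/-- The reverse of a 3-arc. -/
def rev3 {V : Type*} (t : V × V × V × V) : V × V × V × V :=
  (t.2.2.2, t.2.2.1, t.2.1, t.1)

/-- `G` is regular of valency `d`. -/
def Regular {V : Type*} (G : SimpleGraph V) (d : ℕ) : Prop :=
  ∀ u : V, (G.neighborSet u).ncard = d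

/-- The action of `X` preserves the adjacency of `G`. -/
def AdjPres (X : Type*) {V : Type*} [Group X] [MulAction X V] (G : SimpleGraph V) : Prop :=
  ∀ (x : X) (u w : V), G.Adj u w → G.Adj (x • u) (x • w)

/-- `X` is transitive on the vertices. -/
def VertexTrans (X V : Type*) [Group X] [MulAction X V] : Prop :=
  ∀ u w : V, ∃ x : X, x • u = w

/-- `X` is transitive on the arcs of `G`. -/
def ArcTrans (X : Type*) {V : Type*} [Group X] [MulAction X V] (G : SimpleGraph V) : Prop :=
  ∀ a b : V × V, G.Adj a.1 a.2 → G.Adj b.1 b.2 → ∃ x : X, x • a = b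

/-- `G` is `X`-symmetric. -/
def XSymm (X : Type*) {V : Type*} [Group X] [MulAction X V] (G : SimpleGraph V) : Prop :=
  AdjPres X G ∧ VertexTrans X V ∧ ArcTrans X G

/-- `X` is transitive on the 2-arcs of `G`. -/
def Arc2Trans (X : Type*) {V : Type*} [Group X] [MulAction X V] (G : SimpleGraph V) : Prop :=
  ∀ s t : V × V × V, IsArc2 G s → IsArc2 G t → ∃ x : X, x • s = t

/-- `X` is transitive on the 3-arcs of `G`. -/
def Arc3Trans (X : Type*) {V : Type*} [Group X] [MulAction X V] (G : SimpleGraph V) : Prop :=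
  ∀ s t : V × V × V × V, IsArc3 G s → IsArc3 G t → ∃ x : X, x • s = t

/-- `G` is `(X,2)`-arc-transitive. -/
def Arc2TransGraph (X : Type*) {V : Type*} [Group X] [MulAction X V] (G : SimpleGraph V) : Prop :=
  XSymm X G ∧ Arc2Trans X G

/-- `X` is regular on the 2-arcs of `G`, i.e. `G` is `(X,2)`-arc-regular
(together with `X`-symmetry). -/
def Arc2Reg (X : Type*) {V : Type*} [Group X] [MulAction X V] (G : SimpleGraph V) : Prop :=
  XSymm X G ∧ ∀ s t : V × V × V, IsArc2 G s → IsArc2 G t → ∃! x : X, x • s = t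

/-- `Δ` is a self-paired `X`-orbit on the set of 3-arcs of `G`. -/
def SelfPairedOrbit3 (X : Type*) {V : Type*} [Group X] [MulAction X V] (G : SimpleGraph V)
    (Δ : Set (V × V × V × V)) : Prop :=
  (∀ t ∈ Δ, IsArc3 G t) ∧ (∃ t₀ ∈ Δ, Δ = MulAction.orbit X t₀) ∧ ∀ t ∈ Δ, rev3 t ∈ Δ

/-- `ℓ₁(Δ) = k`:  for each `(τ₁,τ,σ,σ₁) ∈ Δ`, the orbit of `σ₁` under the pointwise
stabilizer of `(τ₁,τ,σ)` in `X` has exactly `k` elements. -/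
def Ell1Eq (X : Type*) {V : Type*} [Group X] [MulAction X V]
    (Δ : Set (V × V × V × V)) (k : ℕ) : Prop :=
  ∀ t ∈ Δ, ({u : V | ∃ x : X, x • t.1 = t.1 ∧ x • t.2.1 = t.2.1 ∧
    x • t.2.2.1 = t.2.2.1 ∧ x • t.2.2.2 = u}).ncard = k

/-- The arc set of the cycle traced by `c : ZMod n → V`. -/
def cycleArcSet {V : Type*} (n : ℕ) (c : ZMod n → V) : Set (V × V) :=
  {p | ∃ i : ZMod n, p = (c i, c (i + 1)) ∨ p = (c (i + 1), c i)}

/-- `S` is (the arc set of) an `n`-cycle of `G`. -/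
def IsNCycleSet {V : Type*} (G : SimpleGraph V) (n : ℕ) (S : Set (V × V)) : Prop :=
  ∃ c : ZMod n → V, Function.Injective c ∧ (∀ i, G.Adj (c i) (c (i + 1))) ∧ S = cycleArcSet n c

/-- The vertex set of a cycle given by its arc set. -/
def cycVerts {V : Type*} (S : Set (V × V)) : Set V := {u | ∃ w, (u, w) ∈ S}

/-- The 3-arcs of a cycle given by its arc set. -/
def cycArc3 {V : Type*} (S : Set (V × V)) : Set (V × V × V × V) :=
  {t | (t.1, t.2.1) ∈ S ∧ (t.2.1, t.2.2.1) ∈ S ∧ (t.2.2.1, t.2.2.2) ∈ S ∧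
    t.1 ≠ t.2.2.1 ∧ t.2.1 ≠ t.2.2.2}

/-- The disjoint union `mC_n` of `m` cycles of length `n`. -/
def mCycles (m n : ℕ) : SimpleGraph (Fin m × ZMod n) :=
  SimpleGraph.fromRel (fun p q => p.1 = q.1 ∧ q.2 = p.2 + 1)

/-- `E` is an `X`-orbit (on sets of arcs, e.g. on `n`-cycles). -/
def XOrbitOfArcSets (X : Type*) {V : Type*} [Group X] [MulAction X V]
    (E : Set (Set (V × V))) : Prop :=
  ∃ S₀ ∈ E, E = MulAction.orbit X S₀

/-- The permutation group induced on the vertex set of a cycle (with arc set `S`) by the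
setwise stabilizer in `X` of the cycle. -/
def inducedCyclePerms (X : Type*) {V : Type*} [Group X] [MulAction X V] (S : Set (V × V)) :
    Subgroup (Equiv.Perm ↥(cycVerts S)) where
  carrier := {e | ∃ x : X, x • S = S ∧ ∀ u : ↥(cycVerts S), (e u : V) = x • (u : V)}
  one_mem' := ⟨1, one_smul _ _, fun u => by simp⟩
  mul_mem' := by
    rintro e f ⟨x, hxS, hx⟩ ⟨y, hyS, hy⟩
    refine ⟨x * y, by rw [mul_smul, hyS, hxS], fun u => ?_⟩
    rw [Equiv.Perm.mul_apply, hx, hy, mul_smul]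
  inv_mem' := by
    rintro e ⟨x, hxS, hx⟩
    refine ⟨x⁻¹, inv_smul_eq_iff.mpr hxS.symm, fun u => ?_⟩
    have h := hx (e⁻¹ u)
    rw [Equiv.Perm.coe_inv, Equiv.apply_symm_apply] at h
    rw [eq_inv_smul_iff]
    exact h.symm

/-- `G` is a near `n`-gonal graph with respect to the set `E` of `n`-cycles. -/
def NearNGonal {V : Type*} (G : SimpleGraph V) (n : ℕ) (E : Set (Set (V × V))) : Prop :=
  G.Connected ∧ 4 ≤ G.girth ∧ (∀ S ∈ E, IsNCycleSet G n S) ∧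
    ∀ t : V × V × V, IsArc2 G t →
      ∃! S : Set (V × V), S ∈ E ∧ (t.1, t.2.1) ∈ S ∧ (t.2.1, t.2.2) ∈ S

/-!
If `G` contains a triangle, 2-arc-transitivity closes every 2-arc into a triangle, so the
connected graph `G` is complete, and being 4-valent it is `K₅`.

Otherwise fix a 2-arc `(a, b, c)`. An `X`-orbit `O` of 3-arcs has `N * k` elements, where `N` is
the number of 2-arcs and `k` the number of members of `O` starting with `(a, b, c)`; hence reversing
3-arcs, which permutes the orbits, preserves `k`. Since `X` is not 3-arc-transitive, the orbits with
`k = 1` number one or three, so reversal fixes one of them: a self-paired orbit `Δ` with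
`ℓ₁(Δ) = 1`. Every 2-arc `(a, b, c)` then continues uniquely to a 2-arc `(b, c, d)` with
`(a, b, c, d) ∈ Δ`, and self-pairedness makes this successor map `F` a permutation of the 2-arcs
commuting with `X`. By transitivity a power of `F` that fixes the first vertex of one 2-arc is the
identity, so the first vertices along each `F`-orbit form a cycle of length `orderOf F ≥ 4`.
Reversing a 2-arc reverses its cycle, so every 2-arc lies on exactly one of these cycles.
-/

def rev2 {V : Type*} (s : V × V × V) : V × V × V := (s.2.2, s.2.1, s.1)

section Action

variable {V X : Type*} [Group X] [MulAction X V] {G : SimpleGraph V}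

theorem AdjPres.isArc2_smul (hAP : AdjPres X G) (x : X) {s : V × V × V} (hs : IsArc2 G s) :
    IsArc2 G (x • s) :=
  ⟨hAP x _ _ hs.1, hAP x _ _ hs.2.1, fun h => hs.2.2 (smul_left_cancel x h)⟩

theorem AdjPres.isArc2_smul_iff (hAP : AdjPres X G) (x : X) {s : V × V × V} :
    IsArc2 G (x • s) ↔ IsArc2 G s :=
  ⟨fun h => by simpa using hAP.isArc2_smul x⁻¹ h, hAP.isArc2_smul x⟩

theorem AdjPres.isArc3_smul (hAP : AdjPres X G) (x : X) {t : V × V × V × V} (ht : IsArc3 G t) :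
    IsArc3 G (x • t) :=
  ⟨hAP x _ _ ht.1, hAP x _ _ ht.2.1, hAP x _ _ ht.2.2.1,
    fun h => ht.2.2.2.1 (smul_left_cancel x h), fun h => ht.2.2.2.2 (smul_left_cancel x h)⟩

theorem AdjPres.isArc3_of_mem_orbit (hAP : AdjPres X G) {t u : V × V × V × V} (ht : IsArc3 G t)
    (hu : u ∈ MulAction.orbit X t) : IsArc3 G u := by
  obtain ⟨x, rfl⟩ := hu
  exact hAP.isArc3_smul x ht

theorem image_rev3_orbit (t : V × V × V × V) :
    rev3 '' MulAction.orbit X t = MulAction.orbit X (rev3 t) := by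
  ext u
  simp only [Set.mem_image, MulAction.mem_orbit_iff]
  constructor
  · rintro ⟨_, ⟨x, rfl⟩, rfl⟩
    exact ⟨x, rfl⟩
  · rintro ⟨x, rfl⟩
    exact ⟨x • t, ⟨x, rfl⟩, rfl⟩

theorem isArc2_rev2_iff {s : V × V × V} : IsArc2 G (rev2 s) ↔ IsArc2 G s :=
  ⟨fun h => ⟨h.2.1.symm, h.1.symm, h.2.2.symm⟩, fun h => ⟨h.2.1.symm, h.1.symm, h.2.2.symm⟩⟩

end Action

section Complete

variable {V X : Type*} [Group X] [MulAction X V] {G : SimpleGraph V}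

theorem adj_of_isArc2_of_triangle (hAP : AdjPres X G) (h2t : Arc2Trans X G) {a b c : V}
    (hab : G.Adj a b) (hbc : G.Adj b c) (hac : G.Adj a c) {s : V × V × V} (hs : IsArc2 G s) :
    G.Adj s.1 s.2.2 := by
  obtain ⟨x, rfl⟩ := h2t (a, b, c) s ⟨hab, hbc, hac.ne⟩ hs
  exact hAP x a c hac

theorem SimpleGraph.Connected.eq_top_of_isArc2_adj (hconn : G.Connected)
    (h : ∀ s, IsArc2 G s → G.Adj s.1 s.2.2) : G = ⊤ := by
  ext u w
  refine ⟨SimpleGraph.Adj.ne, fun hne => ?_⟩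
  obtain ⟨p⟩ := hconn.preconnected u w
  induction p with
  | nil => exact absurd rfl hne
  | @cons u v w huv _ ih =>
    by_cases hvw : v = w
    · exact hvw ▸ huv
    · exact h (u, v, w) ⟨huv, ih hvw, hne⟩

theorem nonempty_iso_top_of_regular [Finite V] [Nonempty V] {d : ℕ}
    (hreg : Regular (⊤ : SimpleGraph V) d) :
    Nonempty ((⊤ : SimpleGraph V) ≃g (⊤ : SimpleGraph (Fin (d + 1)))) := by
  obtain ⟨u⟩ := ‹Nonempty V›
  have hcard : Nat.card V = d + 1 := by
    have h := hreg u
    rw [SimpleGraph.neighborSet_top, Set.ncard_compl, Set.ncard_singleton] at h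
    have := Nat.card_pos (α := V)
    omega
  exact ⟨SimpleGraph.Iso.completeGraph (Finite.equivFin V |>.trans (finCongr hcard))⟩

end Complete

section Regular

variable {V : Type*} {G : SimpleGraph V}

theorem not_isAcyclic_of_regular [Finite V] (hconn : G.Connected) {d : ℕ} (hreg : Regular G d)
    (hd : 2 ≤ d) : ¬ G.IsAcyclic := by
  classical
  have := Fintype.ofFinite V
  intro hac
  obtain ⟨u⟩ := hconn.nonempty
  obtain ⟨w, huw⟩ : (G.neighborSet u).Nonempty :=
    Set.nonempty_of_ncard_ne_zero (by rw [hreg u]; omega)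
  have : Nontrivial V := ⟨u, w, huw.ne⟩
  obtain ⟨v, hv⟩ := SimpleGraph.IsTree.exists_vert_degree_one_of_nontrivial ⟨hconn, hac⟩
  have := hreg v
  rw [← Nat.card_coe_set_eq, Nat.card_eq_fintype_card,
    SimpleGraph.card_neighborSet_eq_degree] at this
  omega

theorem exists_isArc2_of_regular [Nonempty V] {d : ℕ} (hreg : Regular G d) (hd : 2 ≤ d) :
    ∃ a b c : V, IsArc2 G (a, b, c) := by
  obtain ⟨a⟩ := ‹Nonempty V›
  obtain ⟨b, hab⟩ :=
    Set.nonempty_of_ncard_ne_zero (s := G.neighborSet a) (by rw [hreg a]; omega)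
  obtain ⟨c, hbc, hca⟩ :=
    Set.exists_ne_of_one_lt_ncard (s := G.neighborSet b) (by rw [hreg b]; omega) a
  exact ⟨a, b, c, hab, hbc, hca.symm⟩

theorem four_le_girth (hG : ¬ G.IsAcyclic) (h3 : G.CliqueFree 3) : 4 ≤ G.girth := by
  obtain ⟨u, w, hw, hlen⟩ := SimpleGraph.exists_girth_eq_length.mpr hG
  have := SimpleGraph.three_le_girth hG
  by_contra h
  obtain ⟨t, ht⟩ :=
    SimpleGraph.is3Clique_iff_exists_cycle_length_three.mpr ⟨u, w, hw, by omega⟩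
  exact h3 t ht

end Regular

section CycleArcSet

variable {V : Type*} {n : ℕ}

theorem mk_mem_cycleArcSet (c : ZMod n → V) (i : ZMod n) : (c i, c (i + 1)) ∈ cycleArcSet n c :=
  ⟨i, Or.inl rfl⟩

theorem cycleArcSet_comp_add_right (c : ZMod n → V) (k : ZMod n) :
    cycleArcSet n (fun i => c (i + k)) = cycleArcSet n c := by
  have key : ∀ (c : ZMod n → V) k, cycleArcSet n (fun i => c (i + k)) ⊆ cycleArcSet n c := by
    rintro c k p ⟨i, h⟩
    exact ⟨i + k, by simpa only [add_right_comm] using h⟩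
  refine (key c k).antisymm ?_
  simpa only [neg_add_cancel_right] using key (fun i => c (i + k)) (-k)

theorem cycleArcSet_comp_sub_left (c : ZMod n → V) (k : ZMod n) :
    cycleArcSet n (fun i => c (k - i)) = cycleArcSet n c := by
  have key : ∀ c : ZMod n → V, cycleArcSet n (fun i => c (k - i)) ⊆ cycleArcSet n c := by
    rintro c p ⟨i, h⟩
    refine ⟨k - i - 1, ?_⟩
    simp only [sub_add_cancel]
    simp only [sub_sub] at h ⊢
    exact h.symm
  refine (key c).antisymm ?_
  simpa only [sub_sub_cancel] using key (fun i => c (k - i))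

theorem exists_eq_of_mem_cycleArcSet {c : ZMod n → V} (hc : Function.Injective c)
    {u v w : V} (huv : (u, v) ∈ cycleArcSet n c) (hvw : (v, w) ∈ cycleArcSet n c) (huw : u ≠ w) :
    ∃ i, (u, v, w) = (c i, c (i + 1), c (i + 2)) ∨ (u, v, w) = (c (i + 2), c (i + 1), c i) := by
  have two : ∀ i : ZMod n, i + 1 + 1 = i + 2 := fun i => by rw [add_assoc, one_add_one_eq_two]
  obtain ⟨i, hi | hi⟩ := huv <;> obtain ⟨j, hj | hj⟩ := hvw <;>
    simp only [Prod.mk.injEq] at hi hj <;> obtain ⟨rfl, rfl⟩ := hi <;> obtain ⟨hv, rfl⟩ := hj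
  · obtain rfl := hc hv
    exact ⟨i, Or.inl (by rw [two])⟩
  · obtain rfl := add_right_cancel (hc hv)
    exact absurd rfl huw
  · obtain rfl := hc hv
    exact absurd rfl huw
  · obtain rfl := hc hv
    exact ⟨j, Or.inr (by rw [two])⟩

end CycleArcSet

theorem Equiv.Perm.apply_zpow_apply {α : Type*} (F : Equiv.Perm α) (k : ℤ) (a : α) :
    F ((F ^ k) a) = (F ^ (k + 1)) a := by
  rw [add_comm, zpow_add, zpow_one, Equiv.Perm.mul_apply]

/-- `F` moves every 2-arc `(a, b, c)` one step forward to a 2-arc `(b, c, d)`, commuting with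
`X`, and a step is undone by stepping the reversed 2-arc. It is a permutation of all triples fixing
the non-2-arcs, so that its integer powers and its order are available. -/
structure IsArc2Successor (X : Type*) {V : Type*} [Group X] [MulAction X V] (G : SimpleGraph V)
    (F : Equiv.Perm (V × V × V)) : Prop where
  isArc2_apply : ∀ s, IsArc2 G s → IsArc2 G (F s)
  fst_apply : ∀ s, IsArc2 G s → (F s).1 = s.2.1
  snd_apply : ∀ s, IsArc2 G s → (F s).2.1 = s.2.2
  apply_of_not_isArc2 : ∀ s, ¬ IsArc2 G s → F s = s
  apply_smul : ∀ (x : X) s, F (x • s) = x • F s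
  apply_rev2_apply : ∀ s, F (rev2 (F s)) = rev2 s

section VertexCycle

variable {V : Type*} (F : Equiv.Perm (V × V × V)) (s : V × V × V)

noncomputable def vertexCycle : ZMod (orderOf F) → V :=
  fun i => ((F ^ (i.cast : ℤ)) s).1

theorem vertexCycle_intCast (k : ℤ) :
    vertexCycle F s k = ((F ^ k) s).1 := by
  rw [vertexCycle, zpow_eq_zpow_iff_modEq.mpr
    ((ZMod.intCast_eq_intCast_iff _ _ _).mp (ZMod.intCast_zmod_cast (k : ZMod (orderOf F))))]

theorem vertexCycle_zpow_apply (k : ℤ) :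
    vertexCycle F ((F ^ k) s) = fun i => vertexCycle F s (i + k) := by
  funext i
  obtain ⟨j, rfl⟩ := ZMod.intCast_surjective i
  rw [vertexCycle_intCast, ← Equiv.Perm.mul_apply, ← zpow_add, ← Int.cast_add,
    vertexCycle_intCast]

end VertexCycle

namespace IsArc2Successor

variable {V X : Type*} [Group X] [MulAction X V] {G : SimpleGraph V}
  {F : Equiv.Perm (V × V × V)}

theorem isArc2_apply_iff (hF : IsArc2Successor X G F) {s : V × V × V} :
    IsArc2 G (F s) ↔ IsArc2 G s :=
  ⟨not_imp_not.mp fun hs => by rwa [hF.apply_of_not_isArc2 s hs], hF.isArc2_apply s⟩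

theorem isArc2_zpow_apply (hF : IsArc2Successor X G F) (k : ℤ) {s : V × V × V}
    (hs : IsArc2 G s) : IsArc2 G ((F ^ k) s) := by
  have h := (((F.subtypePerm fun _ => hF.isArc2_apply_iff) ^ k) ⟨s, hs⟩).2
  rwa [Equiv.Perm.subtypePerm_zpow, Equiv.Perm.subtypePerm_apply] at h

theorem eq_mk_fst_apply (hF : IsArc2Successor X G F) {s : V × V × V} (hs : IsArc2 G s) :
    s = (s.1, (F s).1, (F (F s)).1) := by
  rw [hF.fst_apply _ (hF.isArc2_apply s hs), hF.snd_apply s hs, hF.fst_apply s hs]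

theorem zpow_apply_smul (hF : IsArc2Successor X G F) (k : ℤ) (x : X) (s : V × V × V) :
    (F ^ k) (x • s) = x • (F ^ k) s := by
  have h : Commute F (MulAction.toPerm x) := Equiv.ext fun s => hF.apply_smul x s
  exact DFunLike.congr_fun (h.zpow_left k).eq s

theorem zpow_apply_rev2 (hF : IsArc2Successor X G F) (k : ℤ) (s : V × V × V) :
    (F ^ k) (rev2 s) = rev2 ((F ^ (-k)) s) := by
  let R : Equiv.Perm (V × V × V) := Function.Involutive.toPerm rev2 fun _ => rfl
  have h : SemiconjBy R F⁻¹ F := Equiv.ext fun s => by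
    change rev2 (F⁻¹ s) = F (rev2 s)
    rw [← hF.apply_rev2_apply (F⁻¹ s), show F (F⁻¹ s) = s from F.apply_symm_apply s]
  have hk := DFunLike.congr_fun (h.zpow_right k).eq s
  change rev2 ((F⁻¹ ^ k) s) = (F ^ k) (rev2 s) at hk
  rw [← hk, inv_zpow']

theorem zpow_apply_eq (hF : IsArc2Successor X G F) {s : V × V × V} (hs : IsArc2 G s)
    (k : ℤ) :
    (F ^ k) s = (vertexCycle F s k, vertexCycle F s (k + 1), vertexCycle F s (k + 2)) := by
  have h1 : ((k : ZMod (orderOf F)) + 1) = ((k + 1 : ℤ) : ZMod (orderOf F)) := by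
    push_cast; rfl
  have h2 : ((k : ZMod (orderOf F)) + 2) = ((k + 1 + 1 : ℤ) : ZMod (orderOf F)) := by
    push_cast; ring
  rw [h1, h2, vertexCycle_intCast, vertexCycle_intCast, vertexCycle_intCast,
    ← Equiv.Perm.apply_zpow_apply, ← Equiv.Perm.apply_zpow_apply, ← Equiv.Perm.apply_zpow_apply]
  exact hF.eq_mk_fst_apply (hF.isArc2_zpow_apply k hs)

theorem zpow_eq_one_of_fst_zpow_apply (hF : IsArc2Successor X G F) (h2t : Arc2Trans X G)
    {s : V × V × V} (hs : IsArc2 G s) {k : ℤ} (h : ((F ^ k) s).1 = s.1) : F ^ k = 1 := by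
  -- By transitivity `F ^ k` fixes the first vertex of every 2-arc, and a 2-arc is determined by
  -- the first vertices of itself and of its next two steps.
  have hfst : ∀ t, IsArc2 G t → ((F ^ k) t).1 = t.1 := by
    intro t ht
    obtain ⟨x, rfl⟩ := h2t s t hs ht
    rw [hF.zpow_apply_smul]
    exact congrArg (x • ·) h
  have hcomm : ∀ t, F ((F ^ k) t) = (F ^ k) (F t) := fun t => by
    simpa using Equiv.Perm.zpow_apply_comm F 1 k
  ext t : 1
  by_cases ht : IsArc2 G t
  · have ht1 := hF.isArc2_apply t ht
    rw [Equiv.Perm.one_apply, hF.eq_mk_fst_apply (hF.isArc2_zpow_apply k ht), hcomm, hcomm,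
      hfst t ht, hfst _ ht1, hfst _ (hF.isArc2_apply _ ht1), ← hF.eq_mk_fst_apply ht]
  · exact Equiv.Perm.zpow_apply_eq_self_of_apply_eq_self (hF.apply_of_not_isArc2 t ht) k

theorem fst_zpow_apply_eq_iff (hF : IsArc2Successor X G F) (h2t : Arc2Trans X G)
    {s : V × V × V} (hs : IsArc2 G s) {a b : ℤ} :
    ((F ^ a) s).1 = ((F ^ b) s).1 ↔ (a : ZMod (orderOf F)) = b := by
  rw [ZMod.intCast_eq_intCast_iff, ← zpow_eq_zpow_iff_modEq]
  refine ⟨fun h => ?_, fun h => by rw [h]⟩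
  have h1 : ((F ^ (a - b)) ((F ^ b) s)).1 = ((F ^ b) s).1 := by
    rwa [← Equiv.Perm.mul_apply, ← zpow_add, sub_add_cancel]
  have := hF.zpow_eq_one_of_fst_zpow_apply h2t (hF.isArc2_zpow_apply b hs) h1
  rwa [zpow_sub, mul_inv_eq_one] at this

theorem vertexCycle_injective (hF : IsArc2Successor X G F) (h2t : Arc2Trans X G)
    {s : V × V × V} (hs : IsArc2 G s) : Function.Injective (vertexCycle F s) := by
  intro i j h
  obtain ⟨a, rfl⟩ := ZMod.intCast_surjective i
  obtain ⟨b, rfl⟩ := ZMod.intCast_surjective j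
  rwa [vertexCycle_intCast, vertexCycle_intCast, hF.fst_zpow_apply_eq_iff h2t hs] at h

theorem adj_vertexCycle (hF : IsArc2Successor X G F) {s : V × V × V} (hs : IsArc2 G s)
    (i : ZMod (orderOf F)) : G.Adj (vertexCycle F s i) (vertexCycle F s (i + 1)) := by
  obtain ⟨k, rfl⟩ := ZMod.intCast_surjective i
  have h := hF.isArc2_zpow_apply k hs
  rw [hF.zpow_apply_eq hs k] at h
  exact h.1

theorem vertexCycle_rev2 (hF : IsArc2Successor X G F) {s : V × V × V} (hs : IsArc2 G s) :
    vertexCycle F (rev2 s) = fun i => vertexCycle F s (2 - i) := by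
  funext i
  obtain ⟨k, rfl⟩ := ZMod.intCast_surjective i
  rw [vertexCycle_intCast, hF.zpow_apply_rev2, rev2, hF.zpow_apply_eq hs]
  push_cast
  ring_nf

theorem four_le_orderOf [Finite V] (hF : IsArc2Successor X G F) (h3 : G.CliqueFree 3)
    {s : V × V × V} (hs : IsArc2 G s) : 4 ≤ orderOf F := by
  classical
  have hs1 := hF.isArc2_apply s hs
  have h : ((F ^ orderOf F) s).1 = s.1 := by rw [pow_orderOf_eq_one, Equiv.Perm.one_apply]
  have := orderOf_pos F
  -- the first vertices of `s`, `F s`, `F² s`, `F³ s` are distinct as `G` has no triangle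
  by_contra! hlt
  interval_cases h' : orderOf F <;>
    simp only [pow_succ, pow_zero, one_mul, Equiv.Perm.mul_apply] at h
  · exact hs.1.ne' (hF.fst_apply s hs ▸ h)
  · exact hs.2.2 (by rw [← h, hF.fst_apply _ hs1, hF.snd_apply s hs])
  · have hadj := hF.isArc2_apply _ hs1
    rw [hF.fst_apply _ hadj, hF.snd_apply _ hs1] at h
    refine h3 {s.1, s.2.1, s.2.2} (SimpleGraph.is3Clique_triple_iff.mpr ⟨hs.1, ?_, hs.2.1⟩)
    rw [← h, ← hF.snd_apply s hs]
    exact hs1.2.1.symm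

theorem nearNGonal (hF : IsArc2Successor X G F) (h2t : Arc2Trans X G) (hconn : G.Connected)
    (hgirth : 4 ≤ G.girth) :
    NearNGonal G (orderOf F)
      ((fun s => cycleArcSet (orderOf F) (vertexCycle F s)) '' {s | IsArc2 G s}) := by
  refine ⟨hconn, hgirth, ?_, fun t ht => ?_⟩
  · rintro _ ⟨s, hs, rfl⟩
    exact ⟨_, hF.vertexCycle_injective h2t hs, hF.adj_vertexCycle hs, rfl⟩
  have ht0 := hF.zpow_apply_eq ht 0
  simp only [zpow_zero, Equiv.Perm.one_apply, Int.cast_zero, zero_add, Prod.ext_iff] at ht0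
  obtain ⟨h0, h1, h2⟩ := ht0
  refine ⟨_, ⟨⟨t, ht, rfl⟩, ?_, ?_⟩, ?_⟩
  · rw [h0, h1, ← zero_add 1]
    exact mk_mem_cycleArcSet _ _
  · rw [h1, h2, ← one_add_one_eq_two]
    exact mk_mem_cycleArcSet _ _
  rintro _ ⟨⟨s, hs, rfl⟩, hts₁, hts₂⟩
  obtain ⟨i, hi | hi⟩ :=
    exists_eq_of_mem_cycleArcSet (hF.vertexCycle_injective h2t hs) hts₁ hts₂ ht.2.2 <;>
    obtain ⟨k, rfl⟩ := ZMod.intCast_surjective i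
  · obtain rfl : t = (F ^ k) s := by rw [hF.zpow_apply_eq hs k]; exact hi
    dsimp only
    rw [vertexCycle_zpow_apply, cycleArcSet_comp_add_right]
  · obtain rfl : t = rev2 ((F ^ k) s) := by rw [hF.zpow_apply_eq hs k]; exact hi
    dsimp only
    rw [hF.vertexCycle_rev2 (hF.isArc2_zpow_apply k hs), cycleArcSet_comp_sub_left,
      vertexCycle_zpow_apply, cycleArcSet_comp_add_right]

end IsArc2Successor

section OrbitsOnArc3

variable {V X : Type*} [Group X] [MulAction X V] {G : SimpleGraph V}

/-- `Ell1Eq X Δ k` says that this set has `k` elements for every `t ∈ Δ`. -/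
def lastVertexOrbit (X : Type*) {V : Type*} [Group X] [MulAction X V] (t : V × V × V × V) :
    Set V :=
  {u | ∃ x : X, x • t.1 = t.1 ∧ x • t.2.1 = t.2.1 ∧ x • t.2.2.1 = t.2.2.1 ∧ x • t.2.2.2 = u}

theorem mem_lastVertexOrbit_self (t : V × V × V × V) : t.2.2.2 ∈ lastVertexOrbit X t :=
  ⟨1, one_smul _ _, one_smul _ _, one_smul _ _, one_smul _ _⟩

theorem mem_lastVertexOrbit_iff {a b c d e : V} :
    e ∈ lastVertexOrbit X (a, b, c, d) ↔ (a, b, c, e) ∈ MulAction.orbit X (a, b, c, d) := by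
  simp [lastVertexOrbit, MulAction.mem_orbit_iff, Prod.ext_iff]

theorem lastVertexOrbit_smul (y : X) (t : V × V × V × V) :
    lastVertexOrbit X (y • t) = y • lastVertexOrbit X t := by
  ext u
  simp only [lastVertexOrbit, Set.mem_smul_set_iff_inv_smul_mem, Set.mem_ofPred_eq,
    Prod.smul_fst, Prod.smul_snd]
  constructor
  · rintro ⟨x, h1, h2, h3, rfl⟩
    refine ⟨y⁻¹ * x * y, ?_, ?_, ?_, ?_⟩ <;> simp only [mul_smul, h1, h2, h3, inv_smul_smul]
  · rintro ⟨x, h1, h2, h3, h4⟩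
    refine ⟨y * x * y⁻¹, ?_, ?_, ?_, ?_⟩ <;> simp [mul_smul, h1, h2, h3, h4]

theorem ell1Eq_orbit {t : V × V × V × V} {k : ℕ} (h : (lastVertexOrbit X t).ncard = k) :
    Ell1Eq X (MulAction.orbit X t) k := by
  rintro _ ⟨y, rfl⟩
  change (lastVertexOrbit X (y • t)).ncard = k
  rw [lastVertexOrbit_smul, Set.ncard_smul_set, h]

theorem SelfPairedOrbit3.existsUnique_extension {Δ : Set (V × V × V × V)}
    (hΔ : SelfPairedOrbit3 X G Δ) (hℓ : Ell1Eq X Δ 1) (h2t : Arc2Trans X G) {s : V × V × V}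
    (hs : IsArc2 G s) : ∃! d, (s.1, s.2.1, s.2.2, d) ∈ Δ := by
  obtain ⟨hΔ3, ⟨t, ht, rfl⟩, -⟩ := hΔ
  have ht3 := hΔ3 t ht
  obtain ⟨x, hx⟩ := h2t (t.1, t.2.1, t.2.2.1) s ⟨ht3.1, ht3.2.1, ht3.2.2.2.1⟩ hs
  have hmem : (s.1, s.2.1, s.2.2, x • t.2.2.2) ∈ MulAction.orbit X t := by
    rw [← hx]
    exact ⟨x, rfl⟩
  refine ⟨x • t.2.2.2, hmem, fun d hd => ?_⟩
  have hd' : d ∈ lastVertexOrbit X (s.1, s.2.1, s.2.2, x • t.2.2.2) := by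
    rw [mem_lastVertexOrbit_iff, MulAction.orbit_eq_iff.mpr hmem]
    exact hd
  obtain ⟨u, hu⟩ := Set.ncard_eq_one.mp (hℓ _ hmem)
  have hself := mem_lastVertexOrbit_self (X := X) (s.1, s.2.1, s.2.2, x • t.2.2.2)
  change lastVertexOrbit X _ = _ at hu
  rw [hu] at hd' hself
  exact hd'.trans hself.symm


theorem exists_isArc2Successor_of_extension [Finite V] (hAP : AdjPres X G)
    (e : V × V × V → V) (harc : ∀ s, IsArc2 G s → IsArc2 G (s.2.1, s.2.2, e s))
    (hback : ∀ s, IsArc2 G s → e (e s, s.2.2, s.2.1) = s.1)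
    (hsmul : ∀ (x : X) s, IsArc2 G s → e (x • s) = x • e s) :
    ∃ F : Equiv.Perm (V × V × V), IsArc2Successor X G F := by
  classical
  let f : V × V × V → V × V × V := fun s => if IsArc2 G s then (s.2.1, s.2.2, e s) else s
  have hf : ∀ s, IsArc2 G s → f s = (s.2.1, s.2.2, e s) := fun s hs => if_pos hs
  have hf' : ∀ s, ¬ IsArc2 G s → f s = s := fun s hs => if_neg hs
  have hinj : Function.Injective f := by
    intro s s' h
    by_cases hs : IsArc2 G s <;> by_cases hs' : IsArc2 G s'
    · rw [hf s hs, hf s' hs', Prod.mk.injEq, Prod.mk.injEq] at h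
      obtain ⟨h2, h3, h4⟩ := h
      have h1 : s.1 = s'.1 := by rw [← hback s hs, ← hback s' hs', h2, h3, h4]
      exact Prod.ext h1 (Prod.ext h2 h3)
    · rw [hf s hs, hf' s' hs'] at h
      exact absurd (h ▸ harc s hs) hs'
    · rw [hf' s hs, hf s' hs'] at h
      exact absurd (h ▸ harc s' hs') hs
    · rwa [hf' s hs, hf' s' hs'] at h
  refine ⟨Equiv.ofBijective f (Finite.injective_iff_bijective.mp hinj),
    ⟨fun s hs => ?_, fun s hs => ?_, fun s hs => ?_, hf', fun x s => ?_, fun s => ?_⟩⟩ <;>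
    simp only [Equiv.ofBijective_apply]
  · exact hf s hs ▸ harc s hs
  · rw [hf s hs]
  · rw [hf s hs]
  · by_cases hs : IsArc2 G s
    · rw [hf _ (hAP.isArc2_smul x hs), hf s hs, hsmul x s hs]
      rfl
    · rw [hf' s hs, hf' _ (mt (hAP.isArc2_smul_iff x).mp hs)]
  · by_cases hs : IsArc2 G s
    · rw [hf s hs, hf _ (isArc2_rev2_iff.mpr (harc s hs))]
      change (s.2.2, s.2.1, e (e s, s.2.2, s.2.1)) = rev2 s
      rw [hback s hs]
      rfl
    · rw [hf' s hs, hf' _ (mt isArc2_rev2_iff.mp hs)]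

theorem SelfPairedOrbit3.exists_isArc2Successor [Finite V] {Δ : Set (V × V × V × V)}
    (hΔ : SelfPairedOrbit3 X G Δ) (hℓ : Ell1Eq X Δ 1) (hAP : AdjPres X G)
    (h2t : Arc2Trans X G) : ∃ F : Equiv.Perm (V × V × V), IsArc2Successor X G F := by
  have hext := fun s (hs : IsArc2 G s) => hΔ.existsUnique_extension hℓ h2t hs
  obtain ⟨hΔ3, ⟨t₀, -, hΔt₀⟩, hΔrev⟩ := hΔ
  classical
  obtain ⟨e, he⟩ : ∃ e : V × V × V → V, ∀ s, IsArc2 G s → (s.1, s.2.1, s.2.2, e s) ∈ Δ :=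
    ⟨fun s => if h : IsArc2 G s then (hext s h).exists.choose else s.1,
      fun s hs => by simpa only [dif_pos hs] using (hext s hs).exists.choose_spec⟩
  have heu : ∀ s, IsArc2 G s → ∀ d, (s.1, s.2.1, s.2.2, d) ∈ Δ → d = e s :=
    fun s hs _ hd => (hext s hs).unique hd (he s hs)
  have harc : ∀ s, IsArc2 G s → IsArc2 G (s.2.1, s.2.2, e s) := fun s hs =>
    have h := hΔ3 _ (he s hs)
    ⟨h.2.1, h.2.2.1, h.2.2.2.2⟩
  refine exists_isArc2Successor_of_extension hAP e harc (fun s hs => ?_) (fun x s hs => ?_)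
  · exact (heu _ (isArc2_rev2_iff.mpr (harc s hs)) s.1 (hΔrev _ (he s hs))).symm
  · have hmem := he s hs
    rw [hΔt₀] at hmem
    exact (heu _ (hAP.isArc2_smul x hs) _
      (hΔt₀ ▸ MulAction.mem_orbit_of_mem_orbit x hmem)).symm

end OrbitsOnArc3

theorem exists_singleton_block_fixed {α β : Type*} {D : Set α} (hD : D.ncard = 3) {φ : α → β}
    (hφ : ∃ d ∈ D, ∃ e ∈ D, φ d ≠ φ e) {ρ : β → β} (hρ : Function.Involutive ρ)
    (hρD : ∀ d ∈ D, ∃ e ∈ D, ρ (φ d) = φ e)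
    (hρsingle : ∀ d ∈ D, ∀ e ∈ D, ρ (φ d) = φ e →
      (∀ f ∈ D, φ f = φ d → f = d) → ∀ f ∈ D, φ f = φ e → f = e) :
    ∃ d ∈ D, (∀ f ∈ D, φ f = φ d → f = d) ∧ ρ (φ d) = φ d := by
  obtain ⟨x, y, z, hxy, hxz, hyz, rfl⟩ := Set.ncard_eq_three.mp hD
  simp only [Set.mem_insert_iff, Set.mem_singleton_iff, forall_eq_or_imp, forall_eq,
    exists_eq_or_imp, exists_eq_left, imp_self, true_and, and_true] at hφ hρD hρsingle ⊢
  -- `ρ` permutes the singleton blocks, of which there are one or three, so it fixes one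
  have := hρ (φ x)
  have := hρ (φ y)
  have := hρ (φ z)
  grind

section Selection

variable {V X : Type*} [Group X] [MulAction X V] {G : SimpleGraph V}

theorem ncard_eq_ncard_isArc2_mul [Finite V] (h2t : Arc2Trans X G) {O : Set (V × V × V × V)}
    (hOX : ∀ (x : X), ∀ t ∈ O, x • t ∈ O) (hO3 : ∀ t ∈ O, IsArc3 G t) {a b c : V}
    (habc : IsArc2 G (a, b, c)) :
    O.ncard = {s | IsArc2 G s}.ncard * {d | (a, b, c, d) ∈ O}.ncard := by
  classical
  have := Fintype.ofFinite V
  let pre : V × V × V × V → V × V × V := fun t => (t.1, t.2.1, t.2.2.1)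
  have hfib : ∀ s, IsArc2 G s → {t ∈ O | pre t = s}.ncard = {d | (a, b, c, d) ∈ O}.ncard := by
    intro s hs
    obtain ⟨x, rfl⟩ := h2t (a, b, c) s habc hs
    have hinj : Function.Injective fun d => x • ((a, b, c, d) : V × V × V × V) :=
      fun d d' h => smul_left_cancel x (congrArg (·.2.2.2) h)
    rw [← Set.ncard_image_of_injective _ hinj]
    congr 1
    ext t
    simp only [Set.mem_ofPred_eq, Set.mem_image]
    constructor
    · rintro ⟨ht, hpre⟩
      have htx : t = x • (a, b, c, x⁻¹ • t.2.2.2) := by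
        simp only [pre, Prod.ext_iff, Prod.smul_fst, Prod.smul_snd] at hpre ⊢
        simp [hpre]
      refine ⟨x⁻¹ • t.2.2.2, ?_, htx.symm⟩
      have := hOX x⁻¹ t ht
      rwa [htx, inv_smul_smul] at this
    · rintro ⟨d, hd, rfl⟩
      exact ⟨hOX x _ hd, rfl⟩
  have hmaps : Set.MapsTo pre O.toFinset {s | IsArc2 G s}.toFinset := fun t ht => by
    have h := hO3 t (Set.mem_toFinset.mp ht)
    exact Set.mem_toFinset.mpr ⟨h.1, h.2.1, h.2.2.2.1⟩
  rw [Set.ncard_eq_toFinset_card' O, Finset.card_eq_sum_card_fiberwise hmaps,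
    Set.ncard_eq_toFinset_card' {s | IsArc2 G s}]
  refine Finset.sum_const_nat fun s hs => ?_
  rw [← hfib s (by simpa using hs), Set.ncard_eq_toFinset_card']
  congr 1
  ext t
  simp

theorem exists_mem_orbit_extension (hAP : AdjPres X G) (h2t : Arc2Trans X G) {a b c : V}
    (habc : IsArc2 G (a, b, c)) {t : V × V × V × V} (ht : IsArc3 G t) :
    ∃ d ∈ G.neighborSet c \ {b}, t ∈ MulAction.orbit X (a, b, c, d) := by
  obtain ⟨x, hx⟩ := h2t (t.1, t.2.1, t.2.2.1) (a, b, c) ⟨ht.1, ht.2.1, ht.2.2.2.1⟩ habc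
  simp only [Prod.ext_iff, Prod.smul_fst, Prod.smul_snd] at hx
  obtain ⟨rfl, rfl, rfl⟩ := hx
  exact ⟨x • t.2.2.2, ⟨hAP x _ _ ht.2.2.1, fun h => ht.2.2.2.2 (smul_left_cancel x h).symm⟩,
    x⁻¹, inv_smul_smul x t⟩

theorem exists_orbit_ne_of_not_arc3Trans (hAP : AdjPres X G) (h2t : Arc2Trans X G)
    (hnot3 : ¬ Arc3Trans X G) {a b c : V} (habc : IsArc2 G (a, b, c)) :
    ∃ d ∈ G.neighborSet c \ {b}, ∃ e ∈ G.neighborSet c \ {b},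
      MulAction.orbit X (a, b, c, d) ≠ MulAction.orbit X (a, b, c, e) := by
  by_contra! h
  refine hnot3 fun t t' ht ht' => ?_
  obtain ⟨d, hd, htd⟩ := exists_mem_orbit_extension hAP h2t habc ht
  obtain ⟨e, he, hte⟩ := exists_mem_orbit_extension hAP h2t habc ht'
  rw [h d hd e he, ← MulAction.orbit_eq_iff.mpr hte] at htd
  exact MulAction.mem_orbit_symm.mp htd

theorem exists_image_rev3_orbit_eq (hAP : AdjPres X G) (h2t : Arc2Trans X G) {a b c d : V}
    (habc : IsArc2 G (a, b, c)) (hd : d ∈ G.neighborSet c \ {b}) :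
    ∃ e ∈ G.neighborSet c \ {b},
      rev3 '' MulAction.orbit X (a, b, c, d) = MulAction.orbit X (a, b, c, e) := by
  have hrev : IsArc3 G (d, c, b, a) :=
    ⟨hd.1.symm, habc.2.1.symm, habc.1.symm, hd.2, habc.2.2.symm⟩
  obtain ⟨e, he, hmem⟩ := exists_mem_orbit_extension hAP h2t habc hrev
  exact ⟨e, he, (image_rev3_orbit _).trans (MulAction.orbit_eq_iff.mpr hmem)⟩

theorem lastVertexOrbit_eq_singleton_iff (hAP : AdjPres X G) {a b c d : V}
    (habc : IsArc2 G (a, b, c)) (hd : d ∈ G.neighborSet c \ {b}) :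
    lastVertexOrbit X (a, b, c, d) = {d} ↔ ∀ e ∈ G.neighborSet c \ {b},
      MulAction.orbit X (a, b, c, e) = MulAction.orbit X (a, b, c, d) → e = d := by
  have hd3 : IsArc3 G (a, b, c, d) := ⟨habc.1, habc.2.1, hd.1, habc.2.2, fun h => hd.2 h.symm⟩
  constructor
  · intro h e _ he
    have := mem_lastVertexOrbit_iff.mpr (MulAction.orbit_eq_iff.mp he)
    rwa [h] at this
  · refine fun h =>
      Set.eq_singleton_iff_unique_mem.mpr ⟨mem_lastVertexOrbit_self _, fun e he => ?_⟩
    have he3 := hAP.isArc3_of_mem_orbit hd3 (mem_lastVertexOrbit_iff.mp he)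
    exact h e ⟨he3.2.2.1, fun h => he3.2.2.2.2 h.symm⟩
      (MulAction.orbit_eq_iff.mpr (mem_lastVertexOrbit_iff.mp he))

theorem ncard_orbit_eq_iff [Finite V] (hAP : AdjPres X G) (h2t : Arc2Trans X G) {a b c d : V}
    (habc : IsArc2 G (a, b, c)) (hd : d ∈ G.neighborSet c \ {b}) :
    (MulAction.orbit X (a, b, c, d)).ncard = {s | IsArc2 G s}.ncard ↔
      lastVertexOrbit X (a, b, c, d) = {d} := by
  have hd3 : IsArc3 G (a, b, c, d) := ⟨habc.1, habc.2.1, hd.1, habc.2.2, fun h => hd.2 h.symm⟩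
  have hpos : {s | IsArc2 G s}.ncard ≠ 0 := Set.ncard_ne_zero_of_mem habc
  have hlast :
      {e | (a, b, c, e) ∈ MulAction.orbit X (a, b, c, d)} = lastVertexOrbit X (a, b, c, d) :=
    Set.ext fun e => mem_lastVertexOrbit_iff.symm
  rw [ncard_eq_ncard_isArc2_mul h2t (O := MulAction.orbit X (a, b, c, d))
    (fun x _ => MulAction.mem_orbit_of_mem_orbit x) (fun _ => hAP.isArc3_of_mem_orbit hd3) habc,
    hlast, Nat.mul_eq_left hpos, Set.ncard_eq_one]
  refine ⟨fun ⟨u, hu⟩ => ?_, fun h => ⟨d, h⟩⟩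
  have hdu := mem_lastVertexOrbit_self (X := X) (a, b, c, d)
  rw [hu, Set.mem_singleton_iff] at hdu
  exact hu.trans (congrArg _ hdu.symm)

theorem exists_selfPairedOrbit3_ell1Eq_one [Finite V] (hreg : Regular G 4) (hAP : AdjPres X G)
    (h2t : Arc2Trans X G) (hnot3 : ¬ Arc3Trans X G) {a b c : V} (habc : IsArc2 G (a, b, c)) :
    ∃ Δ, SelfPairedOrbit3 X G Δ ∧ Ell1Eq X Δ 1 := by
  have hD : (G.neighborSet c \ {b}).ncard = 3 := by
    rw [Set.ncard_sdiff_singleton_of_mem (show b ∈ G.neighborSet c from habc.2.1.symm), hreg c]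
  have hrev3 : Function.Injective (rev3 : V × V × V × V → _) :=
    Function.Involutive.injective fun _ => rfl
  have hρ : Function.Involutive (Set.image rev3 : Set (V × V × V × V) → _) := fun S => by
    rw [Set.image_image]
    exact Set.image_id' S
  have hsingle : ∀ {d}, d ∈ G.neighborSet c \ {b} →
      ((MulAction.orbit X (a, b, c, d)).ncard = {s | IsArc2 G s}.ncard ↔
        ∀ e ∈ G.neighborSet c \ {b},
          MulAction.orbit X (a, b, c, e) = MulAction.orbit X (a, b, c, d) → e = d) :=
    fun hd =>
      (ncard_orbit_eq_iff hAP h2t habc hd).trans (lastVertexOrbit_eq_singleton_iff hAP habc hd)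
  obtain ⟨d, hd, hd_single, hd_self⟩ := exists_singleton_block_fixed hD
    (exists_orbit_ne_of_not_arc3Trans hAP h2t hnot3 habc) hρ
    (fun _ hd => exists_image_rev3_orbit_eq hAP h2t habc hd)
    (fun _ hd _ he hde h => by
      rw [← hsingle he, ← hde, Set.ncard_image_of_injective _ hrev3, (hsingle hd).mpr h])
  have hd3 : IsArc3 G (a, b, c, d) := ⟨habc.1, habc.2.1, hd.1, habc.2.2, fun h => hd.2 h.symm⟩
  refine ⟨MulAction.orbit X (a, b, c, d), ⟨fun _ => hAP.isArc3_of_mem_orbit hd3,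
    ⟨_, MulAction.mem_orbit_self _, rfl⟩,
    fun t ht => hd_self ▸ Set.mem_image_of_mem rev3 ht⟩, ell1Eq_orbit ?_⟩
  rw [(lastVertexOrbit_eq_singleton_iff hAP habc hd).mpr hd_single, Set.ncard_singleton]

end Selection

/-- A connected tetravalent `(X,2)`-transitive graph is either the
complete graph `K₅` or a near `n`-gonal graph for some `n ≥ 4`. -/
theorem tetravalent_arc2transitive_K5_or_nearNGonal {V X : Type*} [Fintype V] [Group X]
    [MulAction X V] (G : SimpleGraph V) (hreg : Regular G 4)
    (hconn : G.Connected) (h2at : Arc2TransGraph X G) (hnot3 : ¬ Arc3Trans X G) :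
    Nonempty (G ≃g (⊤ : SimpleGraph (Fin 5))) ∨
      ∃ (n : ℕ) (E : Set (Set (V × V))), 4 ≤ n ∧ NearNGonal G n E := by
  classical
  obtain ⟨⟨hAP, -, -⟩, h2t⟩ := h2at
  have := hconn.nonempty
  by_cases h3 : G.CliqueFree 3
  · obtain ⟨a, b, c, habc⟩ := exists_isArc2_of_regular hreg (by norm_num)
    obtain ⟨Δ, hΔ, hℓ⟩ := exists_selfPairedOrbit3_ell1Eq_one hreg hAP h2t hnot3 habc
    obtain ⟨F, hF⟩ := hΔ.exists_isArc2Successor hℓ hAP h2t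
    have hgirth := four_le_girth (not_isAcyclic_of_regular hconn hreg (by norm_num)) h3
    exact Or.inr ⟨_, _, hF.four_le_orderOf h3 habc, hF.nearNGonal h2t hconn hgirth⟩
  · obtain ⟨t, ht⟩ : ∃ t, G.IsNClique 3 t := by simpa [SimpleGraph.CliqueFree] using h3
    obtain ⟨a, b, c, hab, hac, hbc, -⟩ := SimpleGraph.is3Clique_iff.mp ht
    obtain rfl :=
      hconn.eq_top_of_isArc2_adj fun _ => adj_of_isArc2_of_triangle hAP h2t hab hbc hac
    exact Or.inl (nonempty_iso_top_of_regular hreg)
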